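/- Removing shortcuts costs at most 2δ per shortcut: for any finite set S of shortcuts and any p,q ∈ C, every path from p to q along C and shortcuts of S that uses exactly the shortcuts s₁,…,s_m ∈ S has length at least d(p,q) − 2·(δ(s₁)+⋯+δ(s_m)). In particular d_S(p,q) ≥ d(p,q) − 2·∑_{s∈S} δ(s). -/
import Mathlib


open Real MeasureTheory

/-- Arc distance between points on the unit circle, given by their polar angles:
the length of the shorter arc between them. -/
noncomputable def arcDist (p q : ℝ) : ℝ := ⨅ n : ℤ, |p - q + 2 * π * n|

/-- Euclidean length of the chord between the circle points with angles `u` and `v`. -/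
noncomputable def chordLen (u v : ℝ) : ℝ := 2 * Real.sin (arcDist u v / 2)

/-- A pair of angles is a genuine shortcut (chord) if its endpoints are distinct points. -/
def IsShortcut (s : ℝ × ℝ) : Prop := arcDist s.1 s.2 ≠ 0

/-- δ(a) = arcsin(a/2) - a/2. -/
noncomputable def sdelta (a : ℝ) : ℝ := Real.arcsin (a / 2) - a / 2

/-- Cost of a path that starts at `p`, fully traverses the listed chords in order
(travelling along the circle in between), and ends at `q`. -/
noncomputable def walkCost (q : ℝ) : ℝ → List (ℝ × ℝ) → ℝ
  | p, [] => arcDist p q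
  | p, e :: L => arcDist p e.1 + chordLen e.1 e.2 + walkCost q e.2 L

/-- Shortest-path distance from `p` to `q` using the shortcuts of `S`
(each usable in either orientation, and always traversed completely). -/
noncomputable def dS (S : Finset (ℝ × ℝ)) (p q : ℝ) : ℝ :=
  sInf {c | ∃ L : List (ℝ × ℝ), (∀ e ∈ L, e ∈ S ∨ (e.2, e.1) ∈ S) ∧ c = walkCost q p L}

/-- Diameter of the circle augmented with the shortcuts of `S`. -/
noncomputable def diamS (S : Finset (ℝ × ℝ)) : ℝ :=
  sSup {d | ∃ p q : ℝ, d = dS S p q}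

/-- diam(k): the optimal diameter achievable with `k` shortcuts. -/
noncomputable def diamK (k : ℕ) : ℝ :=
  sInf {d | ∃ S : Finset (ℝ × ℝ), S.card = k ∧ (∀ s ∈ S, IsShortcut s) ∧ d = diamS S}

/-- Distance from `p` to `q` when a single shortcut with endpoints `u`, `v` is available. -/
noncomputable def dOne (u v p q : ℝ) : ℝ :=
  min (arcDist p q)
    (min (arcDist p u + chordLen u v + arcDist v q)
      (arcDist p v + chordLen u v + arcDist u q))

/-- Two angles represent the same point of the circle. -/
def SamePoint (p q : ℝ) : Prop := arcDist p q = 0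

/-- Two pairs of angles represent the same chord of the circle. -/
def SameChord (s t : ℝ × ℝ) : Prop :=
  (SamePoint s.1 t.1 ∧ SamePoint s.2 t.2) ∨ (SamePoint s.1 t.2 ∧ SamePoint s.2 t.1)

/-- `p` lies in the deep umbra of the shortcut from `u` to `u + β`
(where `0 < β ≤ π` is the counterclockwise arc spanned by the shortcut):
`p` lies in the inner umbra, and `|p u'| + |s| ≥ d(p, v')` where `u'` is the
endpoint closer to `p` and `v'` the other one. -/
def InDeepUmbra (u β p : ℝ) : Prop :=
  (∃ t : ℝ, sdelta (chordLen u (u + β)) ≤ t ∧ t ≤ β - sdelta (chordLen u (u + β)) ∧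
    arcDist p (u + t) = 0) ∧
  (arcDist p u ≤ arcDist p (u + β) →
    arcDist p (u + β) ≤ chordLen p u + chordLen u (u + β)) ∧
  (arcDist p (u + β) ≤ arcDist p u →
    arcDist p u ≤ chordLen p (u + β) + chordLen u (u + β))

/-- `d` equals δ*_k : for `k ∈ {3,4,5}` this is `δ(a*_k)` where `a*_k + δ(a*_k) = (k-1)π/k`,
and for `k = 6` it is `δ(2) = π/2 - 1`. -/
def dstarSpec (k : ℕ) (d : ℝ) : Prop :=
  (k = 6 ∧ d = sdelta 2) ∨
    (∃ a, a ∈ Set.Icc (0 : ℝ) 2 ∧ a + sdelta a = ((k : ℝ) - 1) * π / k ∧ d = sdelta a)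

lemma arcDist_bdd (p q : ℝ) : BddBelow (Set.range fun n : ℤ => |p - q + 2 * π * n|) :=
  ⟨0, by rintro x ⟨n, rfl⟩; positivity⟩

lemma arcDist_le (p q : ℝ) (n : ℤ) : arcDist p q ≤ |p - q + 2 * π * n| :=
  ciInf_le (arcDist_bdd p q) n

lemma arcDist_spec (p q : ℝ) :
    ∃ n : ℤ, |p - q + 2 * π * n| ≤ π ∧ arcDist p q = |p - q + 2 * π * n| := by
  set x := p - q with hx
  set m : ℤ := ⌊(π - x) / (2 * π)⌋ with hm
  have hπ := Real.pi_pos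
  have h2π : (0:ℝ) < 2 * π := by linarith
  have h1 : (m : ℝ) * (2 * π) ≤ π - x := (le_div_iff₀ h2π).mp (Int.floor_le _)
  have h2 : π - x < ((m : ℝ) + 1) * (2 * π) := by
    have := Int.sub_one_lt_floor ((π - x) / (2 * π))
    have h3 : (π - x) / (2 * π) < (m:ℝ) + 1 := by linarith
    calc π - x = ((π - x) / (2*π)) * (2*π) := by field_simp
    _ < ((m:ℝ) + 1) * (2 * π) := by exact mul_lt_mul_of_pos_right h3 h2π
  have habs : |x + 2 * π * m| ≤ π := by rw [abs_le]; constructor <;> nlinarith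
  refine ⟨m, habs, le_antisymm (arcDist_le p q m) (le_ciInf fun n => ?_)⟩
  rcases eq_or_ne n m with rfl | hne
  · exact le_refl _
  · have h1' : (1:ℝ) ≤ |(n:ℝ) - m| := by
      have : (1:ℤ) ≤ |n - m| := Int.one_le_abs (sub_ne_zero.mpr hne)
      calc (1:ℝ) = ((1:ℤ):ℝ) := by norm_num
      _ ≤ |((n - m : ℤ) : ℝ)| := by exact_mod_cast this
      _ = |(n:ℝ) - m| := by push_cast; ring_nf
    have hrw : x + 2 * π * n = (x + 2 * π * m) + 2 * π * ((n:ℝ) - m) := by ring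
    have hge : 2 * π ≤ |2 * π * ((n:ℝ) - m)| := by
      rw [abs_mul, abs_of_pos h2π]; nlinarith
    have htri : |2 * π * ((n:ℝ) - m)| ≤ |x + 2 * π * n| + |x + 2 * π * m| := by
      calc |2 * π * ((n:ℝ) - m)| = |(x + 2 * π * n) + -(x + 2 * π * m)| := by rw [hrw]; ring_nf
      _ ≤ |x + 2 * π * n| + |-(x + 2 * π * m)| := abs_add_le _ _
      _ = |x + 2 * π * n| + |x + 2 * π * m| := by rw [abs_neg]
    linarith

lemma arcDist_nonneg (p q : ℝ) : 0 ≤ arcDist p q := by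
  obtain ⟨n, _, h⟩ := arcDist_spec p q; rw [h]; positivity

lemma arcDist_le_pi (p q : ℝ) : arcDist p q ≤ π := by
  obtain ⟨n, h1, h2⟩ := arcDist_spec p q; rw [h2]; exact h1

lemma arcDist_symm (p q : ℝ) : arcDist p q = arcDist q p := by
  have key : ∀ a b : ℝ, arcDist a b ≤ arcDist b a := by
    intro a b
    obtain ⟨n, _, h⟩ := arcDist_spec b a
    calc arcDist a b ≤ |a - b + 2 * π * ((-n : ℤ) : ℝ)| := arcDist_le a b (-n)
    _ = |-(b - a + 2 * π * n)| := by push_cast; ring_nf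
    _ = |b - a + 2 * π * n| := abs_neg _
    _ = arcDist b a := h.symm
  exact le_antisymm (key p q) (key q p)

lemma arcDist_triangle (p r q : ℝ) : arcDist p q ≤ arcDist p r + arcDist r q := by
  obtain ⟨n1, _, h1⟩ := arcDist_spec p r
  obtain ⟨n2, _, h2⟩ := arcDist_spec r q
  calc arcDist p q ≤ |p - q + 2 * π * ((n1 + n2 : ℤ) : ℝ)| := arcDist_le p q (n1 + n2)
  _ = |(p - r + 2 * π * n1) + (r - q + 2 * π * n2)| := by push_cast; ring_nf
  _ ≤ |p - r + 2 * π * n1| + |r - q + 2 * π * n2| := abs_add_le _ _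
  _ = arcDist p r + arcDist r q := by rw [h1, h2]

lemma chord_id (u v : ℝ) : chordLen u v = arcDist u v - 2 * sdelta (chordLen u v) := by
  have h0 := arcDist_nonneg u v
  have hπ := arcDist_le_pi u v
  have harcsin : Real.arcsin (Real.sin (arcDist u v / 2)) = arcDist u v / 2 :=
    Real.arcsin_sin (by linarith [Real.pi_pos]) (by linarith)
  simp only [chordLen, sdelta]
  rw [show 2 * Real.sin (arcDist u v / 2) / 2 = Real.sin (arcDist u v / 2) by ring, harcsin]
  ring

lemma chordLen_nonneg (u v : ℝ) : 0 ≤ chordLen u v := by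
  have h0 := arcDist_nonneg u v
  have hπ := arcDist_le_pi u v
  have := Real.sin_nonneg_of_nonneg_of_le_pi (x := arcDist u v / 2) (by linarith) (by linarith [Real.pi_pos])
  simp only [chordLen]; linarith

lemma sdelta_chord_nonneg (u v : ℝ) : 0 ≤ sdelta (chordLen u v) := by
  have h0 := arcDist_nonneg u v
  have h := Real.sin_le (x := arcDist u v / 2) (by linarith)
  have := chord_id u v
  simp only [chordLen] at *
  linarith

lemma chordLen_symm (u v : ℝ) : chordLen u v = chordLen v u := by
  simp only [chordLen]; rw [arcDist_symm]

lemma walkCost_ge (q : ℝ) : ∀ (L : List (ℝ × ℝ)) (p : ℝ),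
    arcDist p q - 2 * (L.map fun e => sdelta (chordLen e.1 e.2)).sum ≤ walkCost q p L := by
  intro L
  induction L with
  | nil => intro p; simp [walkCost]
  | cons e L ih =>
    intro p
    have h1 := ih e.2
    have h2 := chord_id e.1 e.2
    have h3 := arcDist_triangle p e.1 q
    have h4 := arcDist_triangle e.1 e.2 q
    simp only [walkCost, List.map_cons, List.sum_cons]
    linarith

lemma walkCost_nonneg (q : ℝ) : ∀ (L : List (ℝ × ℝ)) (p : ℝ), 0 ≤ walkCost q p L := by
  intro L
  induction L with
  | nil => intro p; exact arcDist_nonneg p q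
  | cons e L ih =>
    intro p
    have := arcDist_nonneg p e.1
    have := chordLen_nonneg e.1 e.2
    have := ih e.2
    simp only [walkCost]; linarith

lemma walkCost_first (q : ℝ) (L : List (ℝ × ℝ)) (p w : ℝ) :
    walkCost q p L ≤ arcDist p w + walkCost q w L := by
  cases L with
  | nil => simpa [walkCost] using arcDist_triangle p w q
  | cons e L =>
    have := arcDist_triangle p w e.1
    simp only [walkCost]; linarith

lemma walkCost_drop (q : ℝ) (e : ℝ × ℝ) (C : List (ℝ × ℝ)) :
    ∀ (B : List (ℝ × ℝ)) (w : ℝ), walkCost q e.2 C ≤ walkCost q w (B ++ e :: C) := by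
  intro B
  induction B with
  | nil =>
    intro w
    have := arcDist_nonneg w e.1
    have := chordLen_nonneg e.1 e.2
    simp only [List.nil_append, walkCost]; linarith
  | cons b B ih =>
    intro w
    have := ih b.2
    have := arcDist_nonneg w b.1
    have := chordLen_nonneg b.1 b.2
    simp only [List.cons_append, walkCost, List.append_eq]; linarith

lemma reduce_same (q : ℝ) (e : ℝ × ℝ) (B C : List (ℝ × ℝ)) (w : ℝ) :
    walkCost q w (e :: C) ≤ walkCost q w (e :: (B ++ e :: C)) := by
  have := walkCost_drop q e C B e.2
  simp only [walkCost]; linarith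

lemma reduce_swap (q : ℝ) (e : ℝ × ℝ) (B C : List (ℝ × ℝ)) (w : ℝ) :
    walkCost q w C ≤ walkCost q w (e :: (B ++ (e.2, e.1) :: C)) := by
  have h1 := walkCost_drop q (e.2, e.1) C B e.2
  have h2 := walkCost_first q C w e.1
  have := chordLen_nonneg e.1 e.2
  simp only [walkCost] at *
  linarith

lemma walkCost_prefix_mono (q : ℝ) (X Y : List (ℝ × ℝ))
    (h : ∀ w, walkCost q w Y ≤ walkCost q w X) :
    ∀ (A : List (ℝ × ℝ)) (p : ℝ), walkCost q p (A ++ Y) ≤ walkCost q p (A ++ X) := by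
  intro A
  induction A with
  | nil => intro p; simpa using h p
  | cons a A ih =>
    intro p
    have := ih a.2
    simp only [List.cons_append, walkCost, List.append_eq]; linarith

lemma exists_dup {α β : Type*} (g : α → β) :
    ∀ L : List α, ¬ (L.map g).Nodup →
      ∃ (A : List α) (e : α) (B : List α) (e' : α) (C : List α), L = A ++ e :: (B ++ e' :: C) ∧ g e = g e' := by
  intro L
  induction L with
  | nil => intro h; simp at h
  | cons x L ih =>
    intro h
    by_cases hx : g x ∈ L.map g
    · obtain ⟨e', he'L, he'⟩ := List.mem_map.mp hx
      obtain ⟨B, C, rfl⟩ := List.append_of_mem he'L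
      exact ⟨[], x, B, e', C, by simp, he'.symm⟩
    · have hnd : ¬ (L.map g).Nodup := fun hn => h (by simp [List.nodup_cons, hx, hn])
      obtain ⟨A, e, B, e', C, rfl, hg⟩ := ih hnd
      exact ⟨x :: A, e, B, e', C, by simp, hg⟩

open scoped Classical in
noncomputable def gfun (S : Finset (ℝ × ℝ)) (e : ℝ × ℝ) : ℝ × ℝ :=
  if e ∈ S then e else (e.2, e.1)

lemma sdelta_chord_swap (e : ℝ × ℝ) :
    sdelta (chordLen e.2 e.1) = sdelta (chordLen e.1 e.2) := by
  rw [show chordLen e.2 e.1 = chordLen e.1 e.2 by simp only [chordLen]; rw [arcDist_symm]]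

lemma sdelta_gfun (S : Finset (ℝ × ℝ)) (e : ℝ × ℝ) :
    sdelta (chordLen (gfun S e).1 (gfun S e).2) = sdelta (chordLen e.1 e.2) := by
  unfold gfun; split_ifs with h
  · rfl
  · exact sdelta_chord_swap e

lemma gfun_mem {S : Finset (ℝ × ℝ)} {e : ℝ × ℝ} (h : e ∈ S ∨ (e.2, e.1) ∈ S) :
    gfun S e ∈ S := by
  unfold gfun; split_ifs with h'
  · exact h'
  · exact h.resolve_left h'

lemma gfun_eq {S : Finset (ℝ × ℝ)} {e e' : ℝ × ℝ} (h : gfun S e = gfun S e') :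
    e' = e ∨ e' = (e.2, e.1) := by
  unfold gfun at h; split_ifs at h
  · exact Or.inl h.symm
  · right; rw [h]
  · right; exact h.symm
  · left
    have h1 : e.2 = e'.2 := congrArg Prod.fst h
    have h2 : e.1 = e'.1 := congrArg Prod.snd h
    exact Prod.ext h2.symm h1.symm

lemma key (S : Finset (ℝ × ℝ)) (q : ℝ) :
    ∀ (n : ℕ) (L : List (ℝ × ℝ)), L.length ≤ n →
      (∀ e ∈ L, e ∈ S ∨ (e.2, e.1) ∈ S) → ∀ p,
      arcDist p q - 2 * ∑ s ∈ S, sdelta (chordLen s.1 s.2) ≤ walkCost q p L := by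
  intro n
  induction n with
  | zero =>
    intro L hL _ p
    have : L = [] := List.length_eq_zero_iff.mp (Nat.le_zero.mp hL)
    subst this
    have hs : 0 ≤ ∑ s ∈ S, sdelta (chordLen s.1 s.2) :=
      Finset.sum_nonneg fun s _ => sdelta_chord_nonneg s.1 s.2
    simp only [walkCost]; linarith
  | succ n ih =>
    intro L hL hmem p
    by_cases hnd : (L.map (gfun S)).Nodup
    · have h1 := walkCost_ge q L p
      have hmap : L.map (fun e => sdelta (chordLen e.1 e.2))
          = (L.map (gfun S)).map (fun e => sdelta (chordLen e.1 e.2)) := by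
        rw [List.map_map]
        exact List.map_congr_left fun e _ => (sdelta_gfun S e).symm
      have hsum : ((L.map (gfun S)).map (fun e => sdelta (chordLen e.1 e.2))).sum
          = ∑ s ∈ (L.map (gfun S)).toFinset, sdelta (chordLen s.1 s.2) :=
        (List.sum_toFinset _ hnd).symm
      have hsub : (L.map (gfun S)).toFinset ⊆ S := by
        intro x hx
        rw [List.mem_toFinset, List.mem_map] at hx
        obtain ⟨e, heL, rfl⟩ := hx
        exact gfun_mem (hmem e heL)
      have hle : ∑ s ∈ (L.map (gfun S)).toFinset, sdelta (chordLen s.1 s.2)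
          ≤ ∑ s ∈ S, sdelta (chordLen s.1 s.2) :=
        Finset.sum_le_sum_of_subset_of_nonneg hsub fun s _ _ => sdelta_chord_nonneg s.1 s.2
      rw [hmap, hsum] at h1
      linarith
    · obtain ⟨A, e, B, e', C, rfl, hg⟩ := exists_dup (gfun S) L hnd
      rcases gfun_eq hg with h | h <;> subst h
      · -- e = e' : replace by A ++ e' :: C
        have hmono := walkCost_prefix_mono q (e' :: (B ++ e' :: C)) (e' :: C)
          (fun w => reduce_same q e' B C w) A p
        have hlen : (A ++ e' :: C).length ≤ n := by
          simp only [List.length_append, List.length_cons] at hL ⊢; omega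
        have hmem' : ∀ x ∈ A ++ e' :: C, x ∈ S ∨ (x.2, x.1) ∈ S := by
          intro x hx
          apply hmem
          simp only [List.mem_append, List.mem_cons] at hx ⊢
          tauto
        exact le_trans (ih (A ++ e' :: C) hlen hmem' p) hmono
      · -- e' = (e.2, e.1) : replace by A ++ C
        have hmono := walkCost_prefix_mono q (e :: (B ++ (e.2, e.1) :: C)) C
          (fun w => reduce_swap q e B C w) A p
        have hlen : (A ++ C).length ≤ n := by
          simp only [List.length_append, List.length_cons] at hL ⊢; omega
        have hmem' : ∀ x ∈ A ++ C, x ∈ S ∨ (x.2, x.1) ∈ S := by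
          intro x hx
          apply hmem
          simp only [List.mem_append, List.mem_cons] at hx ⊢
          tauto
        exact le_trans (ih (A ++ C) hlen hmem' p) hmono


/-- removing shortcuts costs at most `2δ` per shortcut: every path from
`p` to `q` using the shortcuts `s₁,…,s_m ∈ S` (in either orientation) has length at
least `d(p,q) - 2(δ(s₁)+⋯+δ(s_m))`; in particular
`d_S(p,q) ≥ d(p,q) - 2∑_{s∈S} δ(s)`. -/
theorem stmt10 (S : Finset (ℝ × ℝ)) (p q : ℝ) :
    (∀ L : List (ℝ × ℝ), (∀ e ∈ L, e ∈ S ∨ (e.2, e.1) ∈ S) →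
      arcDist p q - 2 * (L.map fun e => sdelta (chordLen e.1 e.2)).sum ≤ walkCost q p L) ∧
    arcDist p q - 2 * ∑ s ∈ S, sdelta (chordLen s.1 s.2) ≤ dS S p q := by
  constructor
  · intro L _
    exact walkCost_ge q L p
  · apply le_csInf
    · exact ⟨arcDist p q, [], by simp, by simp [walkCost]⟩
    · rintro c ⟨L, hL, rfl⟩
      exact key S q L.length L le_rfl hL p
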